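/- Upper bound for integer power connectives: Fix an integer d ≥ 1 and ε ∈ (0,1), and let H be a real inner product space. Suppose x_1,…,x_n and y_1,…,y_n are vectors in H with ‖x_i‖ ≤ 1 and ‖y_i‖ ≤ 1, such that ⟪x_i,y_j⟫^d − ⟪x_j,y_i⟫^d ≥ ε for all 1 ≤ i < j ≤ n. Then log n ≤ π/ε + 1. -/

import Mathlib

open RealInnerProductSpace Real

/-!
The `d`-th power of the inner product is the inner product of `d`-fold tensor powers, so it
suffices to treat `d = 1`. Weighting the margin condition of the pair `i < j` by `1 / (j - i)`
gives `ε · ∑_{i<j} 1/(j-i) ≤ ∑_{i≠j} ⟪x i, y j⟫ / (j - i)`, and the left side is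
`ε n (H_n - 1) ≥ ε n (log n - 1)`. The right side is at most `π n` by a vector-valued Hilbert
inequality: as `2π / k = ∫₀^{2π} (π - t) sin (k t) dt`, it equals
`(2π)⁻¹ ∫₀^{2π} (π - t) (⟪C x, S y⟫ - ⟪S x, C y⟫)` for the trigonometric polynomials
`C x (t) = ∑ cos (i t) • x i`, `S x (t) = ∑ sin (i t) • x i`, and Cauchy–Schwarz followed by
Parseval bounds this by `(π / 2) (∑ ‖x i‖² + ∑ ‖y j‖²)`.
-/

open Finset
open scoped TensorProduct

universe u

theorem Real.sin_int_mul_two_pi (j : ℤ) : sin (j * (2 * π)) = 0 := by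
  simpa using sin_add_int_mul_two_pi 0 j

theorem integral_cos_int_mul (j : ℤ) :
    ∫ t in (0)..(2 * π), cos (j * t) = if j = 0 then 2 * π else 0 := by
  split_ifs with hj
  · simp [hj]
  · rw [intervalIntegral.integral_comp_mul_left (fun t => cos t) (by exact_mod_cast hj),
      integral_cos, sin_int_mul_two_pi]
    simp

/-- For `j = 0` both sides vanish, the right one because `x / 0 = 0`. -/
theorem integral_pi_sub_mul_sin_int_mul (j : ℤ) :
    ∫ t in (0)..(2 * π), (π - t) * sin (j * t) = 2 * π / j := by
  rcases eq_or_ne j 0 with rfl | hj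
  · simp
  have hj' : (j : ℝ) ≠ 0 := by exact_mod_cast hj
  have hderiv (t : ℝ) : HasDerivAt (fun t => (t - π) * cos (j * t) / j - sin (j * t) / j ^ 2)
      ((π - t) * sin (j * t)) t := by
    have hlin : HasDerivAt (fun t : ℝ => (j : ℝ) * t) j t := by
      simpa using (hasDerivAt_id t).const_mul (j : ℝ)
    refine (((((hasDerivAt_id' t).sub_const π).mul hlin.cos).div_const (j : ℝ)).sub
      (hlin.sin.div_const ((j : ℝ) ^ 2))).congr_deriv ?_
    field_simp
    ring
  rw [intervalIntegral.integral_eq_sub_of_hasDerivAt (fun t _ => hderiv t)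
    (by apply Continuous.intervalIntegrable; fun_prop), cos_int_mul_two_pi, sin_int_mul_two_pi]
  simp
  ring

section Hilbert

variable {E ι : Type*} [NormedAddCommGroup E] [InnerProductSpace ℝ E] [Fintype ι]

theorem inner_sum_smul_sum_smul (c d : ι → ℝ) (a b : ι → E) :
    ⟪∑ i, c i • a i, ∑ j, d j • b j⟫ = ∑ i, ∑ j, c i * d j * ⟪a i, b j⟫ := by
  simp only [sum_inner, inner_sum, real_inner_smul_left, real_inner_smul_right]
  rw [sum_comm]
  simp only [mul_assoc, mul_left_comm]

theorem abs_inner_sub_inner_le (u v p q : E) :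
    |⟪u, q⟫ - ⟪v, p⟫| ≤ (‖u‖ ^ 2 + ‖v‖ ^ 2 + ‖p‖ ^ 2 + ‖q‖ ^ 2) / 2 := by
  have huq := abs_real_inner_le_norm u q
  have hvp := abs_real_inner_le_norm v p
  calc |⟪u, q⟫ - ⟪v, p⟫| ≤ |⟪u, q⟫| + |⟪v, p⟫| := abs_sub _ _
    _ ≤ _ := by nlinarith [sq_nonneg (‖u‖ - ‖q‖), sq_nonneg (‖v‖ - ‖p‖)]

variable (ω : ι → ℤ)

noncomputable def cosSum (a : ι → E) (t : ℝ) : E := ∑ i, cos (ω i * t) • a i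

noncomputable def sinSum (a : ι → E) (t : ℝ) : E := ∑ i, sin (ω i * t) • a i

theorem inner_cosSum_sinSum_sub_inner_sinSum_cosSum (a b : ι → E) (t : ℝ) :
    ⟪cosSum ω a t, sinSum ω b t⟫ - ⟪sinSum ω a t, cosSum ω b t⟫ =
      ∑ i, ∑ j, ⟪a i, b j⟫ * sin ((ω j - ω i : ℤ) * t) := by
  simp only [cosSum, sinSum, inner_sum_smul_sum_smul, ← sum_sub_distrib]
  refine Fintype.sum_congr _ _ fun i => Fintype.sum_congr _ _ fun j => ?_
  push_cast
  rw [sub_mul, sin_sub]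
  ring

theorem inner_cosSum_add_inner_sinSum (a b : ι → E) (t : ℝ) :
    ⟪cosSum ω a t, cosSum ω b t⟫ + ⟪sinSum ω a t, sinSum ω b t⟫ =
      ∑ i, ∑ j, ⟪a i, b j⟫ * cos ((ω j - ω i : ℤ) * t) := by
  simp only [cosSum, sinSum, inner_sum_smul_sum_smul, ← sum_add_distrib]
  refine Fintype.sum_congr _ _ fun i => Fintype.sum_congr _ _ fun j => ?_
  push_cast
  rw [sub_mul, cos_sub]
  ring

theorem integral_pi_sub_mul_sum_sum_sin (c : ι → ι → ℝ) :
    ∫ t in (0)..(2 * π), (π - t) * ∑ i, ∑ j, c i j * sin ((ω j - ω i : ℤ) * t) =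
      2 * π * ∑ i, ∑ j, c i j / (ω j - ω i : ℤ) := by
  simp only [mul_sum]
  rw [intervalIntegral.integral_finsetSum
    (fun i _ => by apply Continuous.intervalIntegrable; fun_prop)]
  refine Fintype.sum_congr _ _ fun i => ?_
  rw [intervalIntegral.integral_finsetSum
    (fun j _ => by apply Continuous.intervalIntegrable; fun_prop)]
  refine Fintype.sum_congr _ _ fun j => ?_
  simp only [mul_left_comm (π - _), intervalIntegral.integral_const_mul,
    integral_pi_sub_mul_sin_int_mul]
  ring

theorem integral_sum_sum_cos (hω : Function.Injective ω) (c : ι → ι → ℝ) :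
    ∫ t in (0)..(2 * π), ∑ i, ∑ j, c i j * cos ((ω j - ω i : ℤ) * t) =
      2 * π * ∑ i, c i i := by
  classical
  rw [intervalIntegral.integral_finsetSum
    (fun i _ => by apply Continuous.intervalIntegrable; fun_prop), mul_sum]
  refine Fintype.sum_congr _ _ fun i => ?_
  rw [intervalIntegral.integral_finsetSum
    (fun j _ => by apply Continuous.intervalIntegrable; fun_prop)]
  simp only [intervalIntegral.integral_const_mul, integral_cos_int_mul, sub_eq_zero, hω.eq_iff]
  simp [mul_comm]

-- A Hilbert inequality; the diagonal terms vanish because `x / 0 = 0`.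
theorem sum_sum_inner_div_sub_le (hω : Function.Injective ω) (X Y : ι → E) :
    ∑ i, ∑ j, ⟪X i, Y j⟫ / (ω j - ω i : ℤ) ≤ π / 2 * (∑ i, ‖X i‖ ^ 2 + ∑ j, ‖Y j‖ ^ 2) := by
  have hpointwise : ∀ t ∈ Set.Icc 0 (2 * π),
      (π - t) * ∑ i, ∑ j, ⟪X i, Y j⟫ * sin ((ω j - ω i : ℤ) * t) ≤
        π / 2 * (∑ i, ∑ j, ⟪X i, X j⟫ * cos ((ω j - ω i : ℤ) * t) +
          ∑ i, ∑ j, ⟪Y i, Y j⟫ * cos ((ω j - ω i : ℤ) * t)) := by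
    intro t ⟨ht₀, ht₁⟩
    simp only [← inner_cosSum_sinSum_sub_inner_sinSum_cosSum, ← inner_cosSum_add_inner_sinSum,
      real_inner_self_eq_norm_sq]
    calc _ ≤ |π - t| * |_| := (le_abs_self _).trans (abs_mul _ _).le
      _ ≤ π * ((‖cosSum ω X t‖ ^ 2 + ‖sinSum ω X t‖ ^ 2 + ‖cosSum ω Y t‖ ^ 2 +
            ‖sinSum ω Y t‖ ^ 2) / 2) :=
          mul_le_mul (abs_le.2 ⟨by linarith, by linarith⟩) (abs_inner_sub_inner_le _ _ _ _)
            (abs_nonneg _) pi_pos.le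
      _ = _ := by ring
  have hmono := intervalIntegral.integral_mono_on (μ := MeasureTheory.volume) (by positivity)
    (by apply Continuous.intervalIntegrable; fun_prop)
    (by apply Continuous.intervalIntegrable; fun_prop) hpointwise
  rw [intervalIntegral.integral_const_mul, intervalIntegral.integral_add
    (by apply Continuous.intervalIntegrable; fun_prop)
    (by apply Continuous.intervalIntegrable; fun_prop), integral_pi_sub_mul_sum_sum_sin,
    integral_sum_sum_cos ω hω, integral_sum_sum_cos ω hω] at hmono
  simp only [real_inner_self_eq_norm_sq] at hmono
  exact le_of_mul_le_mul_left (hmono.trans_eq (by ring)) (by positivity)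

end Hilbert

theorem sum_range_harmonic (n : ℕ) : ∑ k ∈ range n, harmonic k = n * (harmonic n - 1) := by
  induction n with
  | zero => simp
  | succ n ih =>
    rw [sum_range_succ, ih, harmonic_succ]
    push_cast
    field_simp
    ring

theorem sum_range_inv_sub (j : ℕ) : ∑ i ∈ range j, ((j : ℝ) - i)⁻¹ = harmonic j := by
  rw [harmonic, ← sum_range_reflect]
  push_cast
  refine sum_congr rfl fun i hi => ?_
  have hij : i < j := mem_range.1 hi
  rw [Nat.cast_sub (by omega), Nat.cast_sub (by omega)]
  ring_nf

theorem sum_sum_lt_inv_sub (n : ℕ) :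
    ∑ j : Fin n, ∑ i : Fin n, (if i < j then ((j : ℝ) - i)⁻¹ else 0) = n * (harmonic n - 1) := by
  have hinner (j : Fin n) :
      ∑ i : Fin n, (if i < j then ((j : ℝ) - i)⁻¹ else 0) = harmonic j := by
    simp only [Fin.lt_def]
    rw [Fin.sum_univ_eq_sum_range (fun i => if i < (j : ℕ) then ((j : ℝ) - i)⁻¹ else 0),
      ← sum_filter, ← sum_range_inv_sub]
    congr 1
    ext i
    simp only [mem_filter, mem_range]
    omega
  simp only [hinner]
  rw [Fin.sum_univ_eq_sum_range (fun j => (harmonic j : ℝ)), ← Rat.cast_sum, sum_range_harmonic]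
  push_cast
  ring

theorem mul_log_sub_one_le_sum_sum_lt_inv_sub (n : ℕ) :
    n * (log n - 1) ≤ ∑ j : Fin n, ∑ i : Fin n, (if i < j then ((j : ℝ) - i)⁻¹ else 0) := by
  rw [sum_sum_lt_inv_sub]
  gcongr
  calc log n ≤ log (n + 1 : ℕ) := by
        rcases Nat.eq_zero_or_pos n with rfl | hn
        · simp
        · exact log_le_log (by positivity) (by push_cast; linarith)
    _ ≤ harmonic n := log_add_one_le_harmonic n

theorem sum_sum_div_sub_eq_sum_sum_lt {n : ℕ} (f : Fin n → Fin n → ℝ) :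
    ∑ i, ∑ j, f i j / ((j : ℝ) - i) =
      ∑ j, ∑ i, if i < j then (f i j - f j i) / ((j : ℝ) - i) else 0 := by
  have hsplit (i j : Fin n) : f i j / ((j : ℝ) - i) =
      (if i < j then f i j / ((j : ℝ) - i) else 0) +
        if j < i then -(f i j / ((i : ℝ) - j)) else 0 := by
    rcases lt_trichotomy i j with h | rfl | h
    · simp [h, h.not_gt]
    · simp
    · rw [if_neg h.not_gt, if_pos h, ← div_neg, neg_sub, zero_add]
  rw [Fintype.sum_congr _ _ fun i => Fintype.sum_congr _ _ fun j => hsplit i j]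
  simp only [sum_add_distrib]
  rw [sum_comm (f := fun i j => if i < j then _ else _), ← sum_add_distrib]
  refine sum_congr rfl fun j _ => ?_
  rw [← sum_add_distrib]
  refine sum_congr rfl fun i _ => ?_
  split_ifs <;> ring

theorem mul_sum_sum_lt_inv_sub_le {n : ℕ} {ε : ℝ} (f : Fin n → Fin n → ℝ)
    (hf : ∀ i j, i < j → ε ≤ f i j - f j i) :
    ε * ∑ j : Fin n, ∑ i : Fin n, (if i < j then ((j : ℝ) - i)⁻¹ else 0) ≤
      ∑ i, ∑ j, f i j / ((j : ℝ) - i) := by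
  rw [sum_sum_div_sub_eq_sum_sum_lt, mul_sum]
  refine sum_le_sum fun j _ => ?_
  rw [mul_sum]
  refine sum_le_sum fun i _ => ?_
  split_ifs with h
  · have hpos : (0 : ℝ) < (j : ℝ) - i := sub_pos.2 (by exact_mod_cast h)
    rw [← div_eq_mul_inv]
    exact div_le_div_of_nonneg_right (hf i j h) hpos.le
  · simp

theorem log_le_pi_div_add_one_of_inner_sub_inner {E : Type*} [NormedAddCommGroup E]
    [InnerProductSpace ℝ E] {n : ℕ} {ε : ℝ} (hε : 0 < ε) (X Y : Fin n → E)
    (hX : ∀ i, ‖X i‖ ≤ 1) (hY : ∀ i, ‖Y i‖ ≤ 1)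
    (hXY : ∀ i j, i < j → ε ≤ ⟪X i, Y j⟫ - ⟪X j, Y i⟫) :
    log n ≤ π / ε + 1 := by
  rcases Nat.eq_zero_or_pos n with rfl | hn
  · simp only [Nat.cast_zero, log_zero]
    positivity
  have hupper := sum_sum_inner_div_sub_le (fun i : Fin n => (i : ℤ))
    (Nat.cast_injective.comp Fin.val_injective) X Y
  push_cast at hupper
  have hnorms (Z : Fin n → E) (hZ : ∀ i, ‖Z i‖ ≤ 1) : ∑ i, ‖Z i‖ ^ 2 ≤ n := by
    simpa using sum_le_card_nsmul univ _ 1 fun i _ => pow_le_one₀ (norm_nonneg _) (hZ i)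
  have hmain : n * (ε * (log n - 1)) ≤ n * π :=
    calc n * (ε * (log n - 1)) = ε * (n * (log n - 1)) := by ring
      _ ≤ ε * ∑ j : Fin n, ∑ i : Fin n, (if i < j then ((j : ℝ) - i)⁻¹ else 0) := by
        gcongr
        exact mul_log_sub_one_le_sum_sum_lt_inv_sub n
      _ ≤ π / 2 * (∑ i, ‖X i‖ ^ 2 + ∑ j, ‖Y j‖ ^ 2) :=
        (mul_sum_sum_lt_inv_sub_le (fun i j => ⟪X i, Y j⟫) hXY).trans hupper
      _ ≤ π / 2 * (n + n) := by gcongr <;> exact hnorms _ ‹_›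
      _ = n * π := by ring
  have hε' : ε * (log n - 1) ≤ π := le_of_mul_le_mul_left hmain (by positivity)
  rw [← sub_le_iff_le_add, le_div_iff₀ hε]
  linarith

theorem exists_inner_eq_inner_pow {ι : Type*} {E : Type u} [NormedAddCommGroup E]
    [InnerProductSpace ℝ E] (v : ι → E) {d : ℕ} (hd : 1 ≤ d) :
    ∃ (F : Type u) (_ : NormedAddCommGroup F) (_ : InnerProductSpace ℝ F) (w : ι → F),
      (∀ a, ‖w a‖ = ‖v a‖ ^ d) ∧ ∀ a b, ⟪w a, w b⟫ = ⟪v a, v b⟫ ^ d := by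
  induction d, hd using Nat.le_induction with
  | base => exact ⟨E, inferInstance, inferInstance, v, by simp, by simp⟩
  | succ d _ ih =>
    obtain ⟨F, _, _, w, hnorm, hinner⟩ := ih
    refine ⟨F ⊗[ℝ] E, inferInstance, inferInstance, fun a => w a ⊗ₜ v a, fun a => ?_,
      fun a b => ?_⟩
    · rw [TensorProduct.norm_tmul, hnorm, pow_succ]
    · rw [TensorProduct.inner_tmul, hinner, pow_succ]

/-- Upper bound for integer power connectives `⟪x,y⟫^d`. -/
theorem integer_power_upper_bound
    {H : Type*} [NormedAddCommGroup H] [InnerProductSpace ℝ H]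
    (d : ℕ) (hd : 1 ≤ d)
    (ε : ℝ) (hε : ε ∈ Set.Ioo (0 : ℝ) 1) (n : ℕ)
    (x y : Fin n → H)
    (hx : ∀ i, ‖x i‖ ≤ 1) (hy : ∀ i, ‖y i‖ ≤ 1)
    (hhg : ∀ i j : Fin n, i < j → ε ≤ ⟪x i, y j⟫ ^ d - ⟪x j, y i⟫ ^ d) :
    Real.log n ≤ π / ε + 1 := by
  obtain ⟨F, _, _, w, hnorm, hinner⟩ := exists_inner_eq_inner_pow (Sum.elim x y) hd
  refine log_le_pi_div_add_one_of_inner_sub_inner hε.1 (w ∘ Sum.inl) (w ∘ Sum.inr)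
    (fun i => ?_) (fun i => ?_) (fun i j hij => ?_)
  · simpa [hnorm] using pow_le_one₀ (norm_nonneg _) (hx i)
  · simpa [hnorm] using pow_le_one₀ (norm_nonneg _) (hy i)
  · simpa [hinner] using hhg i j hij
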